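/- Let A be a finite set of positive rationals with |A/A| ≤ K|A|, and let A' ⊆ A be nonempty with E_+(A') ≤ E_0. Then E_+(A) ≤ K^4 · (|A|/|A'|)^4 · E_0. In particular, combining with the Plünnecke–Ruzsa bound |A/A| ≤ K^2|A| when |AA| ≤ K|A|, small energy of a large subset implies small energy of A up to polynomial-in-K losses. -/

import Mathlib

/-!
For `a ∈ A` and `a' ∈ A'` we have `a ∈ (a / a') • A'`, so the dilates `α • A'`, `α ∈ A / A'`,
cover `A` at least `|A'|` times. Counting the additive quadruples of `A` with these multiplicities
gives `|A'|⁴ E(A) ≤ ∑ #{x₁ + x₂ = x₃ + x₄ : xᵢ ∈ αᵢ • A'}`, the sum running over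
`(α₁, α₂, α₃, α₄) ∈ (A / A')⁴`. Two applications of Cauchy–Schwarz bound each summand by the
geometric mean of the four energies `E(αᵢ • A')`, all equal to `E(A')`.
-/

open scoped Pointwise

/-- Additive energy of a finite set of rationals. -/
def addEnergy (A : Finset ℚ) : ℕ :=
  ((A ×ˢ A ×ˢ A ×ˢ A).filter (fun x => x.1 + x.2.1 = x.2.2.1 + x.2.2.2)).card

open scoped Combinatorics.Additive

namespace Finset

section FibreCauchySchwarz
variable {α β M : Type*} [DecidableEq M] (P : Finset α) (Q : Finset β) (f : α → M) (g : β → M)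

lemma card_filter_eq_eq_sum_mul {S : Finset M} (hS : ∀ p ∈ P, f p ∈ S) :
    #{x ∈ P ×ˢ Q | f x.1 = g x.2} = ∑ m ∈ S, #{p ∈ P | f p = m} * #{q ∈ Q | g q = m} := by
  rw [card_eq_sum_card_fiberwise (f := fun x => f x.1) (t := S)
    (fun x hx => hS _ (mem_product.1 (mem_filter.1 hx).1).1)]
  refine sum_congr rfl fun m _ => ?_
  rw [← card_product, filter_filter, ← filter_product]
  congr 1
  exact filter_congr fun x _ => by grind

lemma sq_card_filter_eq_le :
    #{x ∈ P ×ˢ Q | f x.1 = g x.2} ^ 2 ≤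
      #{x ∈ P ×ˢ P | f x.1 = f x.2} * #{x ∈ Q ×ˢ Q | g x.1 = g x.2} := by
  have hP : ∀ p ∈ P, f p ∈ P.image f ∪ Q.image g := fun p hp =>
    mem_union_left _ (mem_image_of_mem f hp)
  have hQ : ∀ q ∈ Q, g q ∈ P.image f ∪ Q.image g := fun q hq =>
    mem_union_right _ (mem_image_of_mem g hq)
  rw [card_filter_eq_eq_sum_mul P Q f g hP, card_filter_eq_eq_sum_mul P P f f hP,
    card_filter_eq_eq_sum_mul Q Q g g hQ]
  simpa only [sq] using sum_mul_sq_le_sq_mul_sq _ _ _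

end FibreCauchySchwarz

variable {G : Type*} [DecidableEq G]

section Add
variable [Add G]

def addQuadruples (s t u v : Finset G) : Finset ((G × G) × G × G) :=
  {x ∈ (s ×ˢ t) ×ˢ u ×ˢ v | x.1.1 + x.1.2 = x.2.1 + x.2.2}

lemma sq_card_addQuadruples_le (s t u v : Finset G) :
    #(addQuadruples s t u v) ^ 2 ≤ E[s, t] * E[u, v] := by
  simpa only [addQuadruples, ← addEnergy_eq_card_filter] using
    sq_card_filter_eq_le (s ×ˢ t) (u ×ˢ v) (fun p => p.1 + p.2) (fun p => p.1 + p.2)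

lemma pow_mul_addEnergy_le_sum {ι : Type*} (I : Finset ι) (X : ι → Finset G) (A : Finset G)
    (m : ℕ) (hcover : ∀ a ∈ A, m ≤ #{i ∈ I | a ∈ X i}) :
    m ^ 4 * E[A] ≤ ∑ i ∈ (I ×ˢ I) ×ˢ I ×ˢ I,
      #(addQuadruples (X i.1.1) (X i.1.2) (X i.2.1) (X i.2.2)) := by
  let covers : (G × G) × G × G → (ι × ι) × ι × ι → Prop := fun x i =>
    (x.1.1 ∈ X i.1.1 ∧ x.1.2 ∈ X i.1.2) ∧ x.2.1 ∈ X i.2.1 ∧ x.2.2 ∈ X i.2.2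
  have hmult : ∀ x ∈ addQuadruples A A A A,
      m ^ 4 ≤ #(((I ×ˢ I) ×ˢ I ×ˢ I).bipartiteAbove covers x) := by
    intro x hx
    simp only [addQuadruples, mem_filter, mem_product] at hx
    obtain ⟨⟨⟨h₁, h₂⟩, h₃, h₄⟩, -⟩ := hx
    have hfibre : ((I ×ˢ I) ×ˢ I ×ˢ I).bipartiteAbove covers x =
        ({i ∈ I | x.1.1 ∈ X i} ×ˢ {i ∈ I | x.1.2 ∈ X i}) ×ˢ
          {i ∈ I | x.2.1 ∈ X i} ×ˢ {i ∈ I | x.2.2 ∈ X i} := by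
      ext
      simp only [mem_bipartiteAbove, mem_product, mem_filter, covers]
      tauto
    rw [hfibre, card_product, card_product, card_product]
    calc m ^ 4 = m * m * (m * m) := by ring
      _ ≤ _ := by gcongr <;> apply hcover <;> assumption
  calc m ^ 4 * E[A] = ∑ _x ∈ addQuadruples A A A A, m ^ 4 := by
        rw [sum_const, smul_eq_mul, addEnergy_eq_card_filter, addQuadruples, mul_comm]
    _ ≤ ∑ x ∈ addQuadruples A A A A, #(((I ×ˢ I) ×ˢ I ×ˢ I).bipartiteAbove covers x) :=
        sum_le_sum hmult
    _ = ∑ i ∈ (I ×ˢ I) ×ˢ I ×ˢ I, #((addQuadruples A A A A).bipartiteBelow covers i) :=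
        sum_card_bipartiteAbove_eq_sum_card_bipartiteBelow covers
    _ ≤ _ := by
        refine sum_le_sum fun i _ => card_le_card fun x hx => ?_
        simp only [bipartiteBelow, addQuadruples, mem_filter, mem_product, covers] at hx ⊢
        tauto

end Add

section AddCommGroup
variable [AddCommGroup G]

lemma addEnergy_eq_card_filter_sub (s t : Finset G) :
    E[s, t] = #{x ∈ (s ×ˢ s) ×ˢ t ×ˢ t | x.1.1 - x.1.2 = x.2.1 - x.2.2} :=
  card_equiv ((Equiv.refl _).prodCongr (Equiv.prodComm _ _)) fun x => by
    simp only [mem_filter, mem_product, Equiv.prodCongr_apply, Equiv.coe_refl, Prod.map,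
      id_eq, Equiv.prodComm_apply, Prod.fst_swap, Prod.snd_swap, sub_eq_sub_iff_add_eq_add]
    grind

lemma sq_addEnergy_le (s t : Finset G) : E[s, t] ^ 2 ≤ E[s] * E[t] := by
  simpa only [← addEnergy_eq_card_filter_sub] using
    sq_card_filter_eq_le (s ×ˢ s) (t ×ˢ t) (fun p => p.1 - p.2) (fun p => p.1 - p.2)

lemma card_addQuadruples_pow_four_le (s t u v : Finset G) :
    #(addQuadruples s t u v) ^ 4 ≤ E[s] * E[t] * (E[u] * E[v]) :=
  calc #(addQuadruples s t u v) ^ 4 = (#(addQuadruples s t u v) ^ 2) ^ 2 := by ring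
    _ ≤ (E[s, t] * E[u, v]) ^ 2 := by gcongr; exact sq_card_addQuadruples_le s t u v
    _ = E[s, t] ^ 2 * E[u, v] ^ 2 := mul_pow _ _ _
    _ ≤ E[s] * E[t] * (E[u] * E[v]) := by gcongr <;> exact sq_addEnergy_le _ _

lemma pow_mul_addEnergy_le_of_cover {ι : Type*} (I : Finset ι) (X : ι → Finset G)
    (A : Finset G) {m e : ℕ} (hcover : ∀ a ∈ A, m ≤ #{i ∈ I | a ∈ X i})
    (he : ∀ i ∈ I, E[X i] ≤ e) : m ^ 4 * E[A] ≤ #I ^ 4 * e := by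
  have hquad : ∀ i ∈ (I ×ˢ I) ×ˢ I ×ˢ I,
      #(addQuadruples (X i.1.1) (X i.1.2) (X i.2.1) (X i.2.2)) ≤ e := by
    rintro ⟨⟨i, j⟩, k, l⟩ hi
    simp only [mem_product] at hi
    refine (Nat.pow_le_pow_iff_left (n := 4) (by norm_num)).1 ?_
    calc _ ≤ E[X i] * E[X j] * (E[X k] * E[X l]) := card_addQuadruples_pow_four_le _ _ _ _
      _ ≤ e * e * (e * e) := by gcongr <;> apply he <;> tauto
      _ = e ^ 4 := by ring
  calc m ^ 4 * E[A] ≤ _ := pow_mul_addEnergy_le_sum I X A m hcover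
    _ ≤ ∑ _i ∈ (I ×ˢ I) ×ˢ I ×ˢ I, e := sum_le_sum hquad
    _ = #I ^ 4 * e := by simp only [sum_const, card_product, smul_eq_mul]; ring

end AddCommGroup

lemma addEnergy_image {H : Type*} [Add G] [Add H] [DecidableEq H] {f : G →ₙ+ H}
    (hf : Function.Injective f) (s t : Finset G) :
    E[s.image f, t.image f] = E[s, t] := by
  let φ : (G × G) × G × G → (H × H) × H × H := fun x => ((f x.1.1, f x.1.2), f x.2.1, f x.2.2)
  have hφ : Function.Injective φ := fun x y hxy => by
    simp only [φ, Prod.mk.injEq, hf.eq_iff] at hxy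
    ext <;> tauto
  rw [addEnergy, addEnergy, ← card_image_of_injective _ hφ]
  congr 1
  ext ⟨⟨a, b⟩, c, d⟩
  simp only [mem_filter, mem_product, mem_image, φ, Prod.exists, Prod.mk.injEq]
  constructor
  · rintro ⟨⟨⟨⟨a, ha, rfl⟩, b, hb, rfl⟩, ⟨c, hc, rfl⟩, d, hd, rfl⟩, h⟩
    rw [← map_add, ← map_add, hf.eq_iff] at h
    exact ⟨a, b, c, d, ⟨⟨⟨ha, hb⟩, hc, hd⟩, h⟩, ⟨rfl, rfl⟩, rfl, rfl⟩
  · rintro ⟨a, b, c, d, ⟨⟨⟨ha, hb⟩, hc, hd⟩, h⟩, ⟨rfl, rfl⟩, rfl, rfl⟩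
    refine ⟨⟨⟨⟨a, ha, rfl⟩, b, hb, rfl⟩, ⟨c, hc, rfl⟩, d, hd, rfl⟩, ?_⟩
    rw [← map_add, ← map_add, h]

lemma addEnergy_smul_finset₀ {R : Type*} [Ring R] [NoZeroDivisors R] [DecidableEq R] {a : R}
    (ha : a ≠ 0) (s : Finset R) : E[a • s] = E[s] :=
  addEnergy_image (f := (AddMonoidHom.mulLeft a).toAddHom) (mul_right_injective₀ ha) s s

lemma card_le_card_filter_mem_smul_finset {K : Type*} [GroupWithZero K] [DecidableEq K]
    {A B : Finset K} {a : K} (ha : a ∈ A) (ha₀ : a ≠ 0) (hB : 0 ∉ B) :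
    #B ≤ #{α ∈ A / B | a ∈ α • B} := by
  refine card_le_card_of_injOn (a / ·) (fun b hb => ?_) fun b hb c hc hbc => ?_
  · have hb₀ : b ≠ 0 := ne_of_mem_of_not_mem hb hB
    exact mem_filter.2 ⟨div_mem_div ha hb, mem_smul_finset.2 ⟨b, hb, div_mul_cancel₀ a hb₀⟩⟩
  · dsimp only at hbc
    rw [div_eq_mul_inv, div_eq_mul_inv] at hbc
    exact inv_injective (mul_left_cancel₀ ha₀ hbc)

end Finset

lemma addEnergy_eq_finset_addEnergy (A : Finset ℚ) : addEnergy A = E[A] := by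
  rw [addEnergy, Finset.addEnergy_eq_card_filter]
  exact Finset.card_equiv (Equiv.prodAssoc _ _ _).symm fun x => by
    simp only [Finset.mem_filter, Finset.mem_product, Equiv.prodAssoc_symm_apply]
    tauto

/-- If `|A/A| ≤ K|A|` and a nonempty subset `A' ⊆ A` has additive energy at most `E₀`, then
`E₊(A) ≤ K⁴ (|A|/|A'|)⁴ E₀`. -/
theorem energy_from_subset (A A' : Finset ℚ) (hpos : ∀ a ∈ A, 0 < a)
    (K : ℝ) (hK : ((A / A).card : ℝ) ≤ K * A.card)
    (hsub : A' ⊆ A) (hne : A'.Nonempty)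
    (E₀ : ℝ) (hE : (addEnergy A' : ℝ) ≤ E₀) :
    (addEnergy A : ℝ) ≤ K ^ 4 * ((A.card : ℝ) / (A'.card : ℝ)) ^ 4 * E₀ := by
  have hA'₀ : (0 : ℚ) ∉ A' := fun h => (hpos 0 (hsub h)).false
  have hdilate : ∀ α ∈ A / A', α ≠ 0 := fun α hα => by
    obtain ⟨a, ha, b, hb, rfl⟩ := Finset.mem_div.1 hα
    exact (div_pos (hpos a ha) (hpos b (hsub hb))).ne'
  have hcover : A'.card ^ 4 * addEnergy A ≤ (A / A').card ^ 4 * addEnergy A' := by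
    simpa only [addEnergy_eq_finset_addEnergy] using
      Finset.pow_mul_addEnergy_le_of_cover (A / A') (· • A') A
        (fun a ha => Finset.card_le_card_filter_mem_smul_finset ha (hpos a ha).ne' hA'₀)
        (fun α hα => (Finset.addEnergy_smul_finset₀ (hdilate α hα) A').le)
  have hquot : ((A / A').card : ℝ) ≤ K * A.card :=
    le_trans (mod_cast Finset.card_le_card (Finset.div_subset_div_left hsub)) hK
  have hA' : (0 : ℝ) < A'.card := mod_cast hne.card_pos
  rw [show K ^ 4 * ((A.card : ℝ) / A'.card) ^ 4 * E₀ = (K * A.card) ^ 4 * E₀ / A'.card ^ 4 by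
    ring, le_div_iff₀ (by positivity)]
  calc (addEnergy A : ℝ) * A'.card ^ 4
      = A'.card ^ 4 * addEnergy A := mul_comm _ _
    _ ≤ (A / A').card ^ 4 * addEnergy A' := mod_cast hcover
    _ ≤ (K * A.card) ^ 4 * E₀ := by gcongr
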